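/- The three-dimensional gradient commuting property holds in the first coordinate: for every continuously differentiable function f on [−1,1]³, the ξ-derivative of the tensor-product interpolant I³f(ξ,η,ζ) = ∑_{i,j,k=0}^N f(ξ_i, ξ_j, ξ_k) l_i(ξ) l_j(η) l_k(ζ) equals the mixed histopolation–interpolation projection of ∂f/∂ξ, i.e. ∂/∂ξ (I³f)(ξ,η,ζ) = ∑_{i=1}^N ∑_{j=0}^N ∑_{k=0}^N (∫_{ξ_{i−1}}^{ξ_i} (∂f/∂ξ)(s, ξ_j, ξ_k) ds) h_i(ξ) l_j(η) l_k(ζ) = ∑_{i=1}^N ∑_{j=0}^N ∑_{k=0}^N (f(ξ_i, ξ_j, ξ_k) − f(ξ_{i−1}, ξ_j, ξ_k)) h_i(ξ) l_j(η) l_k(ζ). -/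

import Mathlib

/-!
Differentiating the interpolant in `ξ` only touches the factors `lᵢ`. The `lᵢ` reproduce
constants, so `∑ᵢ lᵢ' = 0`, and since `hᵢ = -(l₀' + ⋯ + l'ᵢ₋₁)` summation by parts turns
`∑ᵢ cᵢ lᵢ'` into `∑ᵢ (cᵢ - cᵢ₋₁) hᵢ`. The integral form is the fundamental theorem of calculus on
each `[ξᵢ₋₁, ξᵢ]`, where the derivative within `[-1, 1]` is the ordinary one off the endpoints.
-/

open Polynomial MeasureTheory

theorem Polynomial.sum_eq_one_of_eval_eq_ite {R : Type*} [CommRing R] [IsDomain R] {n : ℕ}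
    {ξ : Fin (n + 1) → R} (hξ : Function.Injective ξ) {l : Fin (n + 1) → R[X]}
    (hdeg : ∀ i, (l i).natDegree ≤ n) (hlag : ∀ i j, (l i).eval (ξ j) = if i = j then 1 else 0) :
    ∑ i, l i = 1 := by
  refine sub_eq_zero.mp (eq_zero_of_natDegree_lt_card_of_eval_eq_zero _ hξ (fun j => ?_) ?_)
  · simp [eval_finsetSum, hlag]
  · calc (∑ i, l i - 1).natDegree ≤ n :=
          natDegree_sub_le_of_le (natDegree_sum_le_of_forall_le _ _ fun i _ => hdeg i)
            (natDegree_one.trans_le n.zero_le) |>.trans_eq (max_self n)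
      _ < Fintype.card (Fin (n + 1)) := by simp

theorem Fin.sum_sub_mul_partialSum {R : Type*} [CommRing R] {n : ℕ} (c d : Fin (n + 1) → R) :
    ∑ i : Fin n, (c i.succ - c i.castSucc) * ∑ j : Fin (n + 1),
          (if (j : ℕ) < i + 1 then d j else 0)
      = c (Fin.last n) * ∑ j, d j - ∑ j, c j * d j := by
  induction n with
  | zero => simp
  | succ n ih =>
    have hlast_not_lt (i : Fin n) : ¬ (n + 1 < (i : ℕ) + 1) := by omega
    have hlt_last (j : Fin (n + 1)) : (j : ℕ) < n + 1 := j.isLt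
    rw [Fin.sum_univ_castSucc, Fin.sum_univ_castSucc d, Fin.sum_univ_castSucc (fun j => c j * d j)]
    simp only [Fin.sum_univ_castSucc (n := n + 1), Fin.succ_castSucc, Fin.val_castSucc,
      Fin.val_last, Fin.succ_last, hlast_not_lt, hlt_last, if_true, if_false, add_zero, lt_irrefl]
    have ih' := ih (c ∘ Fin.castSucc) (d ∘ Fin.castSucc)
    simp only [Function.comp_apply] at ih'
    rw [ih']
    ring

theorem sum_sum_sum_mul_mul_eq_sum_sum_sum_mul {R ι κ μ : Type*} [CommSemiring R] [Fintype ι]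
    [Fintype κ] [Fintype μ] (F : ι → κ → μ → R) (p : κ → R) (q : μ → R) :
    ∑ i, ∑ j, ∑ k, F i j k * p j * q k = ∑ j, ∑ k, (∑ i, F i j k) * (p j * q k) := by
  rw [Finset.sum_comm]
  refine Finset.sum_congr rfl fun j _ => ?_
  rw [Finset.sum_comm]
  simp only [Finset.sum_mul, mul_assoc]

section EdgeFunctions

variable {R : Type*} [CommRing R] {n : ℕ} {l : Fin (n + 1) → R[X]} {h : Fin n → R[X]}

theorem sum_mul_eval_derivative_eq_sum_sub_mul_eval (hl : ∑ i, l i = 1)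
    (hh : ∀ i : Fin n,
      h i = -∑ j : Fin (n + 1), if (j : ℕ) < (i : ℕ) + 1 then derivative (l j) else 0)
    (c : Fin (n + 1) → R) (x : R) :
    ∑ i, c i * (derivative (l i)).eval x
      = ∑ i : Fin n, (c i.succ - c i.castSucc) * (h i).eval x := by
  have hsum : ∑ j, (derivative (l j)).eval x = 0 := by
    rw [← eval_finsetSum, ← derivative_sum, hl, derivative_one, eval_zero]
  simp only [hh, eval_neg, eval_finsetSum, apply_ite (eval x), eval_zero, mul_neg,
    Finset.sum_neg_distrib, Fin.sum_sub_mul_partialSum, hsum]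
  ring

theorem sum_sum_sum_mul_eval_derivative_eq_sum_sub_mul_eval {ι κ : Type*} [Fintype ι] [Fintype κ]
    (hl : ∑ i, l i = 1)
    (hh : ∀ i : Fin n,
      h i = -∑ j : Fin (n + 1), if (j : ℕ) < (i : ℕ) + 1 then derivative (l j) else 0)
    (a : Fin (n + 1) → ι → κ → R) (p : ι → R) (q : κ → R) (x : R) :
    ∑ i, ∑ j, ∑ k, a i j k * (derivative (l i)).eval x * p j * q k
      = ∑ i : Fin n, ∑ j, ∑ k, (a i.succ j k - a i.castSucc j k) * (h i).eval x * p j * q k := by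
  have key := fun j k => sum_mul_eval_derivative_eq_sum_sub_mul_eval hl hh (fun i => a i j k) x
  simp only [sum_sum_sum_mul_mul_eq_sum_sum_sum_mul, key]

end EdgeFunctions

theorem hasDerivAt_sum_sum_sum_mul_eval {ι κ μ : Type*} [Fintype ι] [Fintype κ] [Fintype μ]
    (a : ι → κ → μ → ℝ) (l : ι → ℝ[X]) (p : κ → ℝ) (q : μ → ℝ) (x : ℝ) :
    HasDerivAt (fun s => ∑ i, ∑ j, ∑ k, a i j k * (l i).eval s * p j * q k)
      (∑ i, ∑ j, ∑ k, a i j k * (derivative (l i)).eval x * p j * q k) x :=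
  HasDerivAt.fun_sum fun i _ => HasDerivAt.fun_sum fun _ _ => HasDerivAt.fun_sum fun _ _ =>
    ((((l i).hasDerivAt x).const_mul _).mul_const _).mul_const _

theorem intervalIntegral.integral_derivWithin_Icc_of_contDiffOn_Icc_of_le {E : Type*}
    [NormedAddCommGroup E] [NormedSpace ℝ E] [CompleteSpace E] {g : ℝ → E} {a b c d : ℝ}
    (hg : ContDiffOn ℝ 1 g (Set.Icc a b)) (hac : a ≤ c) (hcd : c ≤ d) (hdb : d ≤ b) :
    ∫ s in c..d, derivWithin g (Set.Icc a b) s = g d - g c := by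
  rw [← integral_deriv_of_contDiffOn_Icc (hg.mono (Set.Icc_subset_Icc hac hdb)) hcd,
    integral_of_le hcd, integral_of_le hcd, ← restrict_Ioo_eq_restrict_Ioc]
  refine MeasureTheory.integral_congr_ae ?_
  filter_upwards [self_mem_ae_restrict measurableSet_Ioo] with s hs
  exact derivWithin_of_mem_nhds (Icc_mem_nhds (hac.trans_lt hs.1) (hs.2.trans_le hdb))

theorem tensor_interpolant_xi_derivative_eq_mixed_projection_3d_general
    (N : ℕ) (ξ : Fin (N + 1) → ℝ)
    (hmono : StrictMono ξ) (hfirst : ξ 0 = -1) (hlast : ξ (Fin.last N) = 1)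
    (l : Fin (N + 1) → Polynomial ℝ)
    (hdeg : ∀ i, (l i).natDegree ≤ N)
    (hlag : ∀ i j, (l i).eval (ξ j) = if i = j then 1 else 0)
    (h : Fin N → Polynomial ℝ)
    (hdef : ∀ i : Fin N,
      h i = -∑ j : Fin (N + 1), if (j : ℕ) < (i : ℕ) + 1 then derivative (l j) else 0)
    (f : ℝ × ℝ × ℝ → ℝ)
    (hf : ContDiffOn ℝ 1 f
      (Set.Icc (-1 : ℝ) 1 ×ˢ Set.Icc (-1 : ℝ) 1 ×ˢ Set.Icc (-1 : ℝ) 1)) :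
    ∀ x ∈ Set.Icc (-1 : ℝ) 1, ∀ y ∈ Set.Icc (-1 : ℝ) 1, ∀ z ∈ Set.Icc (-1 : ℝ) 1,
      deriv (fun s => ∑ i : Fin (N + 1), ∑ j : Fin (N + 1), ∑ k : Fin (N + 1),
          f (ξ i, ξ j, ξ k) * (l i).eval s * (l j).eval y * (l k).eval z) x
        = (∑ i : Fin N, ∑ j : Fin (N + 1), ∑ k : Fin (N + 1),
            (∫ s in (ξ i.castSucc)..(ξ i.succ),
                derivWithin (fun u => f (u, ξ j, ξ k)) (Set.Icc (-1 : ℝ) 1) s)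
              * (h i).eval x * (l j).eval y * (l k).eval z) ∧
      deriv (fun s => ∑ i : Fin (N + 1), ∑ j : Fin (N + 1), ∑ k : Fin (N + 1),
          f (ξ i, ξ j, ξ k) * (l i).eval s * (l j).eval y * (l k).eval z) x
        = ∑ i : Fin N, ∑ j : Fin (N + 1), ∑ k : Fin (N + 1),
            (f (ξ i.succ, ξ j, ξ k) - f (ξ i.castSucc, ξ j, ξ k))
              * (h i).eval x * (l j).eval y * (l k).eval z := by
  intro x _ y _ z _
  have hnode (i : Fin (N + 1)) : ξ i ∈ Set.Icc (-1 : ℝ) 1 :=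
    ⟨hfirst ▸ hmono.monotone (Fin.zero_le i), hlast ▸ hmono.monotone (Fin.le_last i)⟩
  have hslice (j k : Fin (N + 1)) : ContDiffOn ℝ 1 (fun u => f (u, ξ j, ξ k)) (Set.Icc (-1) 1) :=
    hf.comp (contDiffOn_id.prodMk contDiffOn_const) fun u hu => ⟨hu, hnode j, hnode k⟩
  have hderiv := (hasDerivAt_sum_sum_sum_mul_eval _ l _ _ x).deriv.trans
    (sum_sum_sum_mul_eval_derivative_eq_sum_sub_mul_eval
      (sum_eq_one_of_eval_eq_ite hmono.injective hdeg hlag) hdef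
      (fun i j k => f (ξ i, ξ j, ξ k)) (fun j => (l j).eval y) (fun k => (l k).eval z) x)
  refine ⟨hderiv.trans ?_, hderiv⟩
  refine Finset.sum_congr rfl fun i _ => Finset.sum_congr rfl fun j _ =>
    Finset.sum_congr rfl fun k _ => ?_
  rw [intervalIntegral.integral_derivWithin_Icc_of_contDiffOn_Icc_of_le (hslice j k)
    (hnode _).1 (hmono Fin.castSucc_lt_succ).le (hnode _).2]

/-- The 3D gradient commuting property in the first coordinate: for every
continuously differentiable `f` on `[-1,1]³`, the `ξ`-derivative of the tensor-product
interpolant `I³f = ∑_{i,j,k} f(ξᵢ,ξⱼ,ξₖ) lᵢ(ξ) lⱼ(η) lₖ(ζ)` equals the mixed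
histopolation–interpolation projection of `∂f/∂ξ`, namely
`∑_{i=1}^N ∑_{j,k=0}^N (∫_{ξ_{i-1}}^{ξ_i} ∂f/∂ξ(s,ξⱼ,ξₖ) ds) hᵢ(ξ) lⱼ(η) lₖ(ζ)
 = ∑_{i=1}^N ∑_{j,k=0}^N (f(ξᵢ,ξⱼ,ξₖ) - f(ξ_{i-1},ξⱼ,ξₖ)) hᵢ(ξ) lⱼ(η) lₖ(ζ)`. -/
theorem tensor_interpolant_xi_derivative_eq_mixed_projection_3d
    (N : ℕ) (hN : 1 ≤ N) (ξ : Fin (N + 1) → ℝ)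
    (hmono : StrictMono ξ) (hfirst : ξ 0 = -1) (hlast : ξ (Fin.last N) = 1)
    (l : Fin (N + 1) → Polynomial ℝ)
    (hdeg : ∀ i, (l i).natDegree ≤ N)
    (hlag : ∀ i j, (l i).eval (ξ j) = if i = j then 1 else 0)
    (h : Fin N → Polynomial ℝ)
    (hdef : ∀ i : Fin N,
      h i = -∑ j : Fin (N + 1), if (j : ℕ) < (i : ℕ) + 1 then derivative (l j) else 0)
    (f : ℝ × ℝ × ℝ → ℝ)
    (hf : ContDiffOn ℝ 1 f
      (Set.Icc (-1 : ℝ) 1 ×ˢ Set.Icc (-1 : ℝ) 1 ×ˢ Set.Icc (-1 : ℝ) 1)) :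
    ∀ x ∈ Set.Icc (-1 : ℝ) 1, ∀ y ∈ Set.Icc (-1 : ℝ) 1, ∀ z ∈ Set.Icc (-1 : ℝ) 1,
      deriv (fun s => ∑ i : Fin (N + 1), ∑ j : Fin (N + 1), ∑ k : Fin (N + 1),
          f (ξ i, ξ j, ξ k) * (l i).eval s * (l j).eval y * (l k).eval z) x
        = (∑ i : Fin N, ∑ j : Fin (N + 1), ∑ k : Fin (N + 1),
            (∫ s in (ξ i.castSucc)..(ξ i.succ),
                derivWithin (fun u => f (u, ξ j, ξ k)) (Set.Icc (-1 : ℝ) 1) s)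
              * (h i).eval x * (l j).eval y * (l k).eval z) ∧
      deriv (fun s => ∑ i : Fin (N + 1), ∑ j : Fin (N + 1), ∑ k : Fin (N + 1),
          f (ξ i, ξ j, ξ k) * (l i).eval s * (l j).eval y * (l k).eval z) x
        = ∑ i : Fin N, ∑ j : Fin (N + 1), ∑ k : Fin (N + 1),
            (f (ξ i.succ, ξ j, ξ k) - f (ξ i.castSucc, ξ j, ξ k))
              * (h i).eval x * (l j).eval y * (l k).eval z :=
  tensor_interpolant_xi_derivative_eq_mixed_projection_3d_general N ξ hmono hfirst hlast l hdeg hlag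
    h hdef f hf
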